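/- Let T be a rooted binary tree with N leaves, let A₁,…,A_k be pairwise disjoint subsets of {1,…,N} with |A_i| = a_i, let n ≥ 1 be a natural number, and let the leaves of T be labeled by a uniformly random bijection from the leaf positions of T to {1,…,N}. Then the probability that there exists a vertex v of T with at least n descendant leaves and an index i such that every descendant leaf of v receives a label in A_i is at most ∑_{i=1}^{k} ∑_{m=n}^{a_i} choose(a_i,m)/choose(N−1,m−1). -/

import Mathlib

/-!
Apply the union bound over the vertices `v` with at least `n` leaves and the colours `i`.
If `v` has `m` descendant leaves, the probability that a uniform labelling puts all of them
into `A_i` is `choose(a_i, m) / choose(N, m)`. The leaf sets of the vertices form a laminar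
family, so those of size `m` are pairwise disjoint and there are at most `N / m` of them;
since `(N / m) / choose(N, m) = 1 / choose(N - 1, m - 1)`, grouping the vertices by `m`
gives the bound.
-/

inductive RBT : Type
  | leaf : RBT
  | node : RBT → RBT → RBT

namespace RBT

def numLeaves : RBT → ℕ
  | leaf => 1
  | node l r => l.numLeaves + r.numLeaves

/-- The paths (from the root) of all leaves of a rooted binary tree. -/
def leafPaths : RBT → List (List Bool)
  | leaf => [[]]
  | node l r => (l.leafPaths.map (false :: ·)) ++ (r.leafPaths.map (true :: ·))

/-- The paths (from the root) of all vertices of a rooted binary tree. -/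
def vertexPaths : RBT → List (List Bool)
  | leaf => [[]]
  | node l r => [] :: ((l.vertexPaths.map (false :: ·)) ++ (r.vertexPaths.map (true :: ·)))

/-- The descendant leaves of the vertex of `t` at path `p`: all leaves of `t`
whose path extends `p`. -/
def descLeaves (t : RBT) (p : List Bool) : List (List Bool) :=
  t.leafPaths.filter (fun q => p.isPrefixOf q)

theorem length_leafPaths : ∀ t : RBT, t.leafPaths.length = t.numLeaves
  | leaf => rfl
  | node l r => by
    simp [leafPaths, numLeaves, length_leafPaths l, length_leafPaths r]

end RBT

open Finset Nat

theorem List.card_filter_get_eq_countP {β : Type*} (l : List β) (p : β → Prop)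
    [DecidablePred p] : #{j : Fin l.length | p (l.get j)} = l.countP p := by
  rw [card_def, filter_val, ← Multiset.countP_map, Fin.univ_val_map, List.ofFn_get]
  simp

theorem mul_div_choose_le_div_choose_pred {c N m : ℕ} (hm : 1 ≤ m) (hmN : m ≤ N)
    (hc : c * m ≤ N) {x : ℝ} (hx : 0 ≤ x) :
    c * (x / N.choose m) ≤ x / (N - 1).choose (m - 1) := by
  obtain ⟨m, rfl⟩ := Nat.exists_eq_add_of_le' hm
  obtain ⟨N, rfl⟩ := Nat.exists_eq_add_of_le' (hm.trans hmN)
  replace hmN : m ≤ N := by omega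
  have hpascal := Nat.add_one_mul_choose_eq N m
  have hc' : c * N.choose m ≤ (N + 1).choose (m + 1) := by
    refine Nat.le_of_mul_le_mul_right ?_ m.succ_pos
    calc c * N.choose m * (m + 1) = c * (m + 1) * N.choose m := by ring
      _ ≤ (N + 1) * N.choose m := Nat.mul_le_mul_right _ hc
      _ = _ := hpascal
  simp only [Nat.add_sub_cancel]
  rw [mul_div_assoc', div_le_div_iff₀ (by exact_mod_cast Nat.choose_pos (by omega))
    (by exact_mod_cast Nat.choose_pos hmN)]
  have : (c : ℝ) * N.choose m ≤ (N + 1).choose (m + 1) := by exact_mod_cast hc'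
  nlinarith

section Perm

open Equiv

variable {α : Type*} [Fintype α] [DecidableEq α]

theorem card_perm_fixing (D : Finset α) :
    #{π : Perm α | ∀ x ∈ D, π x = x} = (Fintype.card α - #D)! := by
  rw [← Fintype.card_subtype, ← card_compl, ← Fintype.card_coe Dᶜ, ← Fintype.card_perm]
  refine Fintype.card_congr ((Perm.subtypeEquivSubtypePerm (· ∈ Dᶜ)).trans
    (Equiv.subtypeEquivRight fun π => ?_)).symm
  simp

theorem card_perm_eqOn (σ₀ : Perm α) (D : Finset α) :
    #{σ : Perm α | ∀ x ∈ D, σ x = σ₀ x} = (Fintype.card α - #D)! := by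
  rw [← card_perm_fixing D]
  refine card_nbij' (σ₀⁻¹ * ·) (σ₀ * ·) ?_ ?_ (fun _ _ => mul_inv_cancel_left _ _)
    (fun _ _ => inv_mul_cancel_left _ _) <;> intro _ _ <;> simp_all

theorem card_perm_mapsTo_le (D B : Finset α) :
    #{σ : Perm α | ∀ x ∈ D, σ x ∈ B} ≤ (#B).descFactorial #D * (Fintype.card α - #D)! := by
  set E := ({σ : Perm α | ∀ x ∈ D, σ x ∈ B} : Finset (Perm α))
  let restrict : Perm α → D → α := fun σ x => σ x
  have hfiber : ∀ g ∈ E.image restrict, #{σ ∈ E | restrict σ = g} ≤ (Fintype.card α - #D)! := by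
    rintro _ hg
    obtain ⟨σ₀, -, rfl⟩ := mem_image.1 hg
    rw [← card_perm_eqOn σ₀ D]
    refine card_le_card fun σ hσ => ?_
    simp only [mem_filter, mem_univ, true_and] at hσ ⊢
    exact fun x hx => congrFun hσ.2 ⟨x, hx⟩
  have himage : E.image restrict ⊆ (univ : Finset (D ↪ B)).image fun e x => (e x : α) := by
    rintro _ hg
    obtain ⟨σ, hσ, rfl⟩ := mem_image.1 hg
    simp only [E, mem_filter, mem_univ, true_and] at hσ
    refine mem_image.2 ⟨⟨fun x => ⟨σ x, hσ x x.2⟩, fun x y hxy => ?_⟩, mem_univ _, rfl⟩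
    exact Subtype.ext (σ.injective (congrArg Subtype.val hxy))
  calc #E ≤ (Fintype.card α - #D)! * #(E.image restrict) := card_le_mul_card_image _ _ hfiber
    _ ≤ (Fintype.card α - #D)! * Fintype.card (D ↪ B) :=
      Nat.mul_le_mul_left _ ((card_le_card himage).trans card_image_le)
    _ = (#B).descFactorial #D * (Fintype.card α - #D)! := by
      rw [Fintype.card_embedding_eq, Fintype.card_coe, Fintype.card_coe, mul_comm]

theorem card_perm_mapsTo_div_le (D B : Finset α) :
    (#{σ : Perm α | ∀ x ∈ D, σ x ∈ B} : ℝ) / (Fintype.card α)! ≤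
      ((#B).choose #D : ℝ) / (Fintype.card α).choose #D := by
  have hD : #D ≤ Fintype.card α := card_le_univ D
  rw [div_le_div_iff₀ (by positivity) (by exact_mod_cast Nat.choose_pos hD)]
  have key : (#B).descFactorial #D * (Fintype.card α - #D)! * (Fintype.card α).choose #D =
      (#B).choose #D * (Fintype.card α)! := by
    rw [Nat.descFactorial_eq_factorial_mul_choose, ← Nat.choose_mul_factorial_mul_factorial hD]
    ring
  exact_mod_cast (Nat.mul_le_mul_right _ (card_perm_mapsTo_le D B)).trans key.le

end Perm

section Laminar

variable {α : Type*}

def IsLaminar (𝒮 : Finset (Finset α)) : Prop :=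
  ∀ S ∈ 𝒮, ∀ S' ∈ 𝒮, Disjoint S S' ∨ S ⊆ S' ∨ S' ⊆ S

theorem IsLaminar.mono {𝒮 𝒯 : Finset (Finset α)} (h𝒮 : IsLaminar 𝒮) (h : 𝒯 ⊆ 𝒮) :
    IsLaminar 𝒯 :=
  fun S hS S' hS' => h𝒮 S (h hS) S' (h hS')

variable [Fintype α] [DecidableEq α]

theorem IsLaminar.card_filter_card_eq_mul_le {𝒮 : Finset (Finset α)} (h𝒮 : IsLaminar 𝒮)
    (m : ℕ) : #{S ∈ 𝒮 | #S = m} * m ≤ Fintype.card α := by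
  set 𝒮m := {S ∈ 𝒮 | #S = m}
  have hdisj : (𝒮m : Set (Finset α)).PairwiseDisjoint id := by
    intro S hS S' hS' hne
    simp only [𝒮m, coe_filter, Set.mem_ofPred_eq] at hS hS'
    rcases h𝒮 S hS.1 S' hS'.1 with h | h | h
    · exact h
    · exact absurd (eq_of_subset_of_card_le h (by omega)) hne
    · exact absurd (eq_of_subset_of_card_le h (by omega)).symm hne
  calc #𝒮m * m = ∑ S ∈ 𝒮m, #S := by rw [sum_const_nat fun S hS => (mem_filter.1 hS).2]
    _ = #(𝒮m.biUnion id) := (card_biUnion hdisj).symm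
    _ ≤ Fintype.card α := card_le_univ _

theorem IsLaminar.sum_choose_div_le {𝒮 : Finset (Finset α)} (h𝒮 : IsLaminar 𝒮)
    {n a : ℕ} (hn : 1 ≤ n) (h𝒮n : ∀ S ∈ 𝒮, n ≤ #S) (ha : a ≤ Fintype.card α) :
    ∑ S ∈ 𝒮, (a.choose #S : ℝ) / (Fintype.card α).choose #S ≤
      ∑ m ∈ Icc n a, (a.choose m : ℝ) / (Fintype.card α - 1).choose (m - 1) := by
  set N := Fintype.card α
  have hmaps : ∀ S ∈ 𝒮, #S ∈ Icc n N := fun S hS => mem_Icc.2 ⟨h𝒮n S hS, card_le_univ S⟩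
  rw [← sum_fiberwise_of_maps_to hmaps]
  calc ∑ m ∈ Icc n N, ∑ S ∈ 𝒮 with #S = m, (a.choose #S : ℝ) / N.choose #S
      = ∑ m ∈ Icc n N, #{S ∈ 𝒮 | #S = m} * ((a.choose m : ℝ) / N.choose m) := by
        refine sum_congr rfl fun m _ => ?_
        rw [sum_congr rfl fun S hS => by rw [(mem_filter.1 hS).2], sum_const, nsmul_eq_mul]
    _ ≤ ∑ m ∈ Icc n N, (a.choose m : ℝ) / (N - 1).choose (m - 1) := by
        refine sum_le_sum fun m hm => ?_
        obtain ⟨hnm, hmN⟩ := mem_Icc.1 hm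
        exact mul_div_choose_le_div_choose_pred (hn.trans hnm) hmN
          (h𝒮.card_filter_card_eq_mul_le m) (Nat.cast_nonneg _)
    _ = ∑ m ∈ Icc n a, (a.choose m : ℝ) / (N - 1).choose (m - 1) := by
        refine (sum_subset (Icc_subset_Icc_right ha) fun m hm hm' => ?_).symm
        rw [Nat.choose_eq_zero_of_lt (by simp_all), Nat.cast_zero, zero_div]

theorem IsLaminar.card_perm_exists_mapsTo_div_le {ι : Type*} [Fintype ι]
    {𝒮 : Finset (Finset α)} (h𝒮 : IsLaminar 𝒮) (B : ι → Finset α) {n : ℕ} (hn : 1 ≤ n) (h𝒮n : ∀ S ∈ 𝒮, n ≤ #S) :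
    (#{σ : Equiv.Perm α | ∃ S ∈ 𝒮, ∃ i, ∀ x ∈ S, σ x ∈ B i} : ℝ) / (Fintype.card α)! ≤
      ∑ i, ∑ m ∈ Icc n #(B i),
        ((#(B i)).choose m : ℝ) / (Fintype.card α - 1).choose (m - 1) := by
  set E := fun (S : Finset α) (i : ι) => ({σ : Equiv.Perm α | ∀ x ∈ S, σ x ∈ B i} :
    Finset (Equiv.Perm α))
  calc _ ≤ ((∑ S ∈ 𝒮, ∑ i, #(E S i) : ℕ) : ℝ) / (Fintype.card α)! := by
        gcongr
        refine (card_le_card fun σ hσ => ?_).trans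
          (card_biUnion_le.trans (sum_le_sum fun _ _ => card_biUnion_le))
        obtain ⟨S, hS, i, hi⟩ := (mem_filter.1 hσ).2
        exact mem_biUnion.2 ⟨S, hS, mem_biUnion.2 ⟨i, mem_univ _, mem_filter.2 ⟨mem_univ _, hi⟩⟩⟩
    _ = ∑ S ∈ 𝒮, ∑ i, (#(E S i) : ℝ) / (Fintype.card α)! := by
        simp only [Nat.cast_sum, sum_div]
    _ ≤ ∑ S ∈ 𝒮, ∑ i, ((#(B i)).choose #S : ℝ) / (Fintype.card α).choose #S :=
        sum_le_sum fun S _ => sum_le_sum fun i _ => card_perm_mapsTo_div_le S (B i)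
    _ = ∑ i, ∑ S ∈ 𝒮, ((#(B i)).choose #S : ℝ) / (Fintype.card α).choose #S := sum_comm
    _ ≤ _ := sum_le_sum fun i _ => h𝒮.sum_choose_div_le hn h𝒮n (card_le_univ _)

end Laminar

namespace RBT

def descLeafIdx (t : RBT) (v : List Bool) : Finset (Fin t.leafPaths.length) :=
  {j | v <+: t.leafPaths.get j}

theorem get_mem_descLeaves_iff (t : RBT) (v : List Bool) (j : Fin t.leafPaths.length) :
    t.leafPaths.get j ∈ t.descLeaves v ↔ j ∈ t.descLeafIdx v := by
  simp [descLeaves, descLeafIdx]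

theorem card_descLeafIdx (t : RBT) (v : List Bool) :
    #(t.descLeafIdx v) = (t.descLeaves v).length := by
  rw [descLeafIdx, List.card_filter_get_eq_countP, descLeaves, List.countP_eq_length_filter]
  simp only [← List.isPrefixOf_iff_prefix, Bool.decide_eq_true]

theorem descLeafIdx_anti (t : RBT) {v w : List Bool} (h : v <+: w) :
    t.descLeafIdx w ⊆ t.descLeafIdx v := by
  intro j hj
  simp only [descLeafIdx, mem_filter, mem_univ, true_and] at hj ⊢
  exact h.trans hj

theorem disjoint_or_subset_descLeafIdx (t : RBT) (v w : List Bool) :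
    Disjoint (t.descLeafIdx v) (t.descLeafIdx w) ∨
      t.descLeafIdx v ⊆ t.descLeafIdx w ∨ t.descLeafIdx w ⊆ t.descLeafIdx v := by
  rw [or_iff_not_imp_left, not_disjoint_iff]
  rintro ⟨j, hv, hw⟩
  simp only [descLeafIdx, mem_filter, mem_univ, true_and] at hv hw
  exact (List.prefix_or_prefix_of_prefix hv hw).symm.imp t.descLeafIdx_anti t.descLeafIdx_anti

theorem isLaminar_image_descLeafIdx (t : RBT) (V : Finset (List Bool)) :
    IsLaminar (V.image t.descLeafIdx) := by
  simp only [IsLaminar, mem_image]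
  rintro _ ⟨v, -, rfl⟩ _ ⟨w, -, rfl⟩
  exact t.disjoint_or_subset_descLeafIdx v w

end RBT

theorem card_filter_fin_add_one_mem {M : ℕ} {A : Finset ℕ} (hA : A ⊆ Icc 1 M) :
    #{x : Fin M | (x : ℕ) + 1 ∈ A} = #A := by
  refine card_bij (fun x _ => (x : ℕ) + 1) (fun x hx => (mem_filter.1 hx).2)
    (fun x _ y _ h => Fin.ext (by omega)) fun y hy => ?_
  obtain ⟨h1, h2⟩ := mem_Icc.1 (hA hy)
  exact ⟨⟨y - 1, by omega⟩, by simpa [Nat.sub_add_cancel h1] using hy, by simp; omega⟩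

theorem prob_monochromatic_clade_general (T : RBT) (N : ℕ) (hN : T.numLeaves = N)
    (k : ℕ) (A : Fin k → Finset ℕ) (hA : ∀ i, A i ⊆ Finset.Icc 1 N)
    (a : Fin k → ℕ) (ha : ∀ i, (A i).card = a i)
    (n : ℕ) (hn : 1 ≤ n) :
    ((Finset.univ.filter (fun σ : Equiv.Perm (Fin T.leafPaths.length) =>
        ∃ v ∈ T.vertexPaths, n ≤ (T.descLeaves v).length ∧
          ∃ i : Fin k, ∀ j : Fin T.leafPaths.length,
            T.leafPaths.get j ∈ T.descLeaves v → ((σ j : ℕ) + 1) ∈ A i)).card : ℝ) /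
        (Fintype.card (Equiv.Perm (Fin T.leafPaths.length)) : ℝ) ≤
      ∑ i : Fin k, ∑ m ∈ Finset.Icc n (a i),
        ((a i).choose m : ℝ) / ((N - 1).choose (m - 1) : ℝ) := by
  have hM : T.leafPaths.length = N := T.length_leafPaths.trans hN
  set B : Fin k → Finset (Fin T.leafPaths.length) := fun i => {x | (x : ℕ) + 1 ∈ A i}
  have hB : ∀ i, #(B i) = a i := fun i => (card_filter_fin_add_one_mem (hM ▸ hA i)).trans (ha i)
  set 𝒮 := {S ∈ T.vertexPaths.toFinset.image T.descLeafIdx | n ≤ #S}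
  have h𝒮 : IsLaminar 𝒮 := (T.isLaminar_image_descLeafIdx _).mono (filter_subset _ _)
  refine (le_trans ?_ (h𝒮.card_perm_exists_mapsTo_div_le B hn
    fun S hS => (mem_filter.1 hS).2)).trans_eq ?_
  · rw [Fintype.card_perm]
    gcongr with σ
    rintro ⟨v, hv, hlen, i, hi⟩
    refine ⟨T.descLeafIdx v, mem_filter.2 ⟨mem_image_of_mem _ (List.mem_toFinset.2 hv),
      (T.card_descLeafIdx v).symm ▸ hlen⟩, i, fun x hx => ?_⟩
    exact mem_filter.2 ⟨mem_univ _, hi x ((T.get_mem_descLeaves_iff v x).2 hx)⟩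
  · simp only [hB, Fintype.card_fin, hM]

/-- Leaf positions of a tree with `N` leaves are indexed by `Fin T.leafPaths.length`
(a set of size `N`), and a uniformly random labeling assigns to the leaf at index
`j` the label `(σ j : ℕ) + 1 ∈ {1, …, N}`, where `σ` is a uniformly random
permutation.  For pairwise disjoint sets `A₁, …, A_k ⊆ {1, …, N}` with
`|A_i| = a_i` and any `n ≥ 1`, the probability that some vertex of `T` with at
least `n` descendant leaves has all its descendant leaves labeled within a single
`A_i` is at most `∑_{i=1}^{k} ∑_{m=n}^{a_i} choose(a_i, m) / choose(N-1, m-1)`. -/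
theorem prob_monochromatic_clade (T : RBT) (N : ℕ) (hN : T.numLeaves = N)
    (k : ℕ) (A : Fin k → Finset ℕ) (hA : ∀ i, A i ⊆ Finset.Icc 1 N)
    (hdisj : ∀ i j, i ≠ j → Disjoint (A i) (A j))
    (a : Fin k → ℕ) (ha : ∀ i, (A i).card = a i)
    (n : ℕ) (hn : 1 ≤ n) :
    ((Finset.univ.filter (fun σ : Equiv.Perm (Fin T.leafPaths.length) =>
        ∃ v ∈ T.vertexPaths, n ≤ (T.descLeaves v).length ∧
          ∃ i : Fin k, ∀ j : Fin T.leafPaths.length,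
            T.leafPaths.get j ∈ T.descLeaves v → ((σ j : ℕ) + 1) ∈ A i)).card : ℝ) /
        (Fintype.card (Equiv.Perm (Fin T.leafPaths.length)) : ℝ) ≤
      ∑ i : Fin k, ∑ m ∈ Finset.Icc n (a i),
        ((a i).choose m : ℝ) / ((N - 1).choose (m - 1) : ℝ) :=
  prob_monochromatic_clade_general T N hN k A hA a ha n hn
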